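/- arXiv:2101.07885 — 4 statements merged into one kernel-verified Lean document; each statement's English description precedes it below -/
import Mathlib

section
/- A free group is residually nilpotent: the intersection of all terms of its lower central series is trivial. -/
/-!
Magnus' argument. Write `w ≠ 1` in syllable form `x_{a₁}^{e₁} ⋯ x_{aₙ}^{eₙ}` with `aᵢ ≠ aᵢ₊₁`
and `eᵢ ≠ 0`, and send `x_a` to `1 + N_a` in the `(n+1) × (n+1)` integer matrices, where `N_a`
has a `1` at `(i-1, i)` whenever `aᵢ = a`. Consecutive syllables have distinct letters, so
`N_a² = 0` and `x_a^e ↦ 1 + e N_a`; hence the `(0, n)` entry of the image of `w` is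
`e₁ ⋯ eₙ ≠ 0`. On the other hand, the `k`-th term of the lower central series maps into the
matrices `1 + A` with `A` vanishing below the `(k+1)`-st superdiagonal, which is trivial for
`k = n`.
-/

open scoped commutatorElement

section CongruenceSubgroup

variable {R : Type*} [Ring R] {F : ℕ → AddSubgroup R} [SetLike.GradedMul F]

theorem mul_sub_one_mem (hF : Antitone F) {k : ℕ} {x y : R} (hx : x - 1 ∈ F k)
    (hy : y - 1 ∈ F k) : x * y - 1 ∈ F k := by
  have h : x * y - 1 = (x - 1) * (y - 1) + ((x - 1) + (y - 1)) := by noncomm_ring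
  rw [h]
  exact add_mem (hF (Nat.le_add_right k k) (SetLike.mul_mem_graded hx hy)) (add_mem hx hy)

variable (F) in
/-- Membership of `u⁻¹` is imposed separately: `1 + F k` need not be closed under inversion when
the filtration is not complete. -/
def congruenceSubgroup (hF : Antitone F) (k : ℕ) : Subgroup Rˣ where
  carrier := {u | (u : R) - 1 ∈ F k ∧ ((u⁻¹ : Rˣ) : R) - 1 ∈ F k}
  mul_mem' := fun ⟨hu, hu'⟩ ⟨hv, hv'⟩ =>
    ⟨by simpa using mul_sub_one_mem hF hu hv, by simpa using mul_sub_one_mem hF hv' hu'⟩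
  one_mem' := by simp
  inv_mem' := fun ⟨hu, hu'⟩ => ⟨hu', by simpa using hu⟩

theorem val_commutatorElement_sub_one_mem (hF : Antitone F) {i j : ℕ} {x y : Rˣ}
    (hx : x ∈ congruenceSubgroup F hF i) (hy : y ∈ congruenceSubgroup F hF j) :
    ((⁅x, y⁆ : Rˣ) : R) - 1 ∈ F (i + j) := by
  have hxy : (x * y - y * x : R) ∈ F (i + j) := by
    have h : (x * y - y * x : R) = (x - 1) * (y - 1) - (y - 1) * (x - 1) := by noncomm_ring
    rw [h]
    exact sub_mem (SetLike.mul_mem_graded hx.1 hy.1)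
      (add_comm j i ▸ SetLike.mul_mem_graded hy.1 hx.1)
  have hinv : ((x⁻¹ * y⁻¹ : Rˣ) : R) - 1 ∈ F 0 := by
    rw [Units.val_mul]
    exact mul_sub_one_mem hF (hF (Nat.zero_le i) hx.2) (hF (Nat.zero_le j) hy.2)
  have h : ((⁅x, y⁆ : Rˣ) : R) - 1
      = (x * y - y * x) + (x * y - y * x) * (((x⁻¹ * y⁻¹ : Rˣ) : R) - 1) := by
    simp [commutatorElement_def, mul_sub, sub_mul, mul_assoc]
  rw [h]
  exact add_mem hxy (add_zero (i + j) ▸ SetLike.mul_mem_graded hxy hinv)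

theorem commutatorElement_mem_congruenceSubgroup (hF : Antitone F) {i j : ℕ} {x y : Rˣ}
    (hx : x ∈ congruenceSubgroup F hF i) (hy : y ∈ congruenceSubgroup F hF j) :
    ⁅x, y⁆ ∈ congruenceSubgroup F hF (i + j) :=
  ⟨val_commutatorElement_sub_one_mem hF hx hy, by
    rw [commutatorElement_inv, add_comm]
    exact val_commutatorElement_sub_one_mem hF hy hx⟩

theorem congruenceSubgroup_eq_bot (hF : Antitone F) {k : ℕ} (hk : F k = ⊥) :
    congruenceSubgroup F hF k = ⊥ :=
  (Subgroup.eq_bot_iff_forall _).2 fun _ hu =>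
    Units.ext (sub_eq_zero.1 ((AddSubgroup.mem_bot).1 (hk ▸ hu.1)))

theorem isDescendingCentralSeries_comap_congruenceSubgroup (hF : Antitone F) {G : Type*}
    [Group G] (ρ : G →* Rˣ) (hρ : ρ.range ≤ congruenceSubgroup F hF 1) :
    Subgroup.IsDescendingCentralSeries fun k => (congruenceSubgroup F hF (k + 1)).comap ρ :=
  ⟨eq_top_iff.2 fun g _ => hρ ⟨g, rfl⟩, fun x k hx g => by
    simpa [map_commutatorElement] using
      commutatorElement_mem_congruenceSubgroup hF hx (hρ ⟨g, rfl⟩)⟩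

theorem lowerCentralSeries_le_comap_congruenceSubgroup (hF : Antitone F) {G : Type*}
    [Group G] (ρ : G →* Rˣ) (hρ : ρ.range ≤ congruenceSubgroup F hF 1) (k : ℕ) :
    (⊤ : Subgroup G).lowerCentralSeries k ≤ (congruenceSubgroup F hF (k + 1)).comap ρ :=
  Subgroup.descending_central_series_ge_lower _
    (isDescendingCentralSeries_comap_congruenceSubgroup hF ρ hρ) k

end CongruenceSubgroup

section UpperBand

variable (R : Type*) [Ring R] (m : ℕ)

def upperBand (k : ℕ) : AddSubgroup (Matrix (Fin m) (Fin m) R) where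
  carrier := {A | ∀ i j : Fin m, (j : ℕ) < i + k → A i j = 0}
  add_mem' ha hb i j h := by simp [ha i j h, hb i j h]
  zero_mem' _ _ _ := rfl
  neg_mem' ha i j h := by simp [ha i j h]

theorem upperBand_antitone : Antitone (upperBand R m) :=
  fun _ _ hkl _ hA i j h => hA i j (by omega)

instance : SetLike.GradedMul (upperBand R m) where
  mul_mem {k l A B} hA hB i j h := by
    rw [Matrix.mul_apply]
    refine Finset.sum_eq_zero fun t _ => ?_
    by_cases ht : (t : ℕ) < i + k
    · rw [hA i t ht, zero_mul]
    · rw [hB t j (by omega), mul_zero]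

theorem upperBand_eq_bot {k : ℕ} (hk : m ≤ k) : upperBand R m k = ⊥ :=
  eq_bot_iff.2 fun _ hA => (AddSubgroup.mem_bot).2 (Matrix.ext fun i j => hA i j (by omega))

end UpperBand

def Units.oneAdd {R : Type*} [Ring R] (N : R) (hN : N * N = 0) : Rˣ where
  val := 1 + N
  inv := 1 - N
  val_inv := by simp [mul_sub, add_mul, hN]
  inv_val := by simp [sub_mul, mul_add, hN]

theorem Units.val_oneAdd_zpow {R : Type*} [Ring R] (N : R) (hN : N * N = 0) (e : ℤ) :
    ((Units.oneAdd N hN ^ e : Rˣ) : R) = 1 + e • N := by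
  induction e using Int.induction_on with
  | zero => simp
  | succ e ih =>
    rw [zpow_add_one, Units.val_mul, ih, add_smul, one_smul]
    change (1 + _) * (1 + N) = _
    rw [mul_one_add, one_add_mul, smul_mul_assoc, hN, smul_zero, add_zero, add_assoc]
  | pred e ih =>
    rw [zpow_sub_one, Units.val_mul, ih, sub_smul, one_smul]
    change (1 + _) * (1 - N) = _
    rw [mul_sub, mul_one, one_add_mul, smul_mul_assoc, hN, smul_zero, add_zero]
    abel

section Syllables

variable {α : Type*}

def IsSyllableForm (s : List (α × ℤ)) : Prop :=
  (s.map Prod.fst).IsChain (· ≠ ·) ∧ ∀ p ∈ s, p.2 ≠ 0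

def syllableProd (s : List (α × ℤ)) : FreeGroup α :=
  (s.map fun p => FreeGroup.of p.1 ^ p.2).prod

theorem IsSyllableForm.exists_syllableProd_eq_zpow_mul {s : List (α × ℤ)}
    (hs : IsSyllableForm s) (a : α) (e : ℤ) :
    ∃ t, IsSyllableForm t ∧ syllableProd t = FreeGroup.of a ^ e * syllableProd s := by
  by_cases he : e = 0
  · exact ⟨s, hs, by simp [he]⟩
  match s, hs with
  | [], _ => exact ⟨[(a, e)], ⟨List.isChain_singleton _, by simpa using he⟩, by simp [syllableProd]⟩
  | (b, f) :: r, ⟨hchain, hexp⟩ =>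
    by_cases hab : a = b
    · subst hab
      by_cases hef : e + f = 0
      · refine ⟨r, ⟨hchain.tail, fun p hp => hexp p (List.mem_cons_of_mem _ hp)⟩, ?_⟩
        simp [syllableProd, ← mul_assoc, ← zpow_add, hef]
      · refine ⟨(a, e + f) :: r, ⟨hchain, ?_⟩, ?_⟩
        · simpa [hef] using fun p hp => hexp p (List.mem_cons_of_mem _ hp)
        · simp [syllableProd, ← mul_assoc, ← zpow_add]
    · refine ⟨(a, e) :: (b, f) :: r, ⟨?_, ?_⟩, by simp [syllableProd]⟩
      · exact List.isChain_cons_cons.2 ⟨hab, hchain⟩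
      · simpa [he] using hexp

theorem exists_isSyllableForm_syllableProd_eq (w : FreeGroup α) :
    ∃ s, IsSyllableForm s ∧ syllableProd s = w := by
  have hw : w ∈ Subgroup.closure (Set.range FreeGroup.of) := by simp
  induction hw using Subgroup.closure_induction_left with
  | one => exact ⟨[], ⟨List.isChain_nil, by simp⟩, rfl⟩
  | mul_left _ hx _ _ ih =>
    obtain ⟨a, rfl⟩ := hx
    obtain ⟨s, hs, rfl⟩ := ih
    simpa using hs.exists_syllableProd_eq_zpow_mul a 1
  | inv_mul_cancel _ hx _ _ ih =>
    obtain ⟨a, rfl⟩ := hx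
    obtain ⟨s, hs, rfl⟩ := ih
    simpa using hs.exists_syllableProd_eq_zpow_mul a (-1)

end Syllables

section LetterMatrix

variable {α : Type*} [DecidableEq α]

def letterMatrix (ls : List α) (m : ℕ) (a : α) : Matrix (Fin m) (Fin m) ℤ :=
  Matrix.of fun i j => if (j : ℕ) = i + 1 ∧ ls[(i : ℕ)]? = some a then 1 else 0

theorem letterMatrix_mul_self {ls : List α} (hls : ls.IsChain (· ≠ ·)) (m : ℕ) (a : α) :
    letterMatrix ls m a * letterMatrix ls m a = 0 := by
  ext i j
  rw [Matrix.mul_apply]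
  refine Finset.sum_eq_zero fun t _ => ?_
  simp only [letterMatrix, Matrix.of_apply, mul_ite, mul_one, mul_zero]
  split_ifs with htj hit <;> try rfl
  obtain ⟨-, hta⟩ := htj
  obtain ⟨ht, hia⟩ := hit
  obtain ⟨hlt, rfl⟩ := List.getElem?_eq_some_iff.1 hia
  obtain ⟨hlt', h⟩ := List.getElem?_eq_some_iff.1 hta
  simp only [ht] at hlt' h
  exact absurd h.symm (hls.getElem _ hlt')

theorem letterMatrix_mem_upperBand (ls : List α) (m : ℕ) (a : α) :
    letterMatrix ls m a ∈ upperBand ℤ m 1 := fun i j h => by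
  simp only [letterMatrix, Matrix.of_apply]
  rw [if_neg (by omega)]

def letterRep (ls : List α) (hls : ls.IsChain (· ≠ ·)) (m : ℕ) :
    FreeGroup α →* (Matrix (Fin m) (Fin m) ℤ)ˣ :=
  FreeGroup.lift fun a => Units.oneAdd (letterMatrix ls m a) (letterMatrix_mul_self hls m a)

theorem range_letterRep_le (ls : List α) (hls : ls.IsChain (· ≠ ·)) (m : ℕ) :
    (letterRep ls hls m).range ≤ congruenceSubgroup (upperBand ℤ m) (upperBand_antitone ℤ m) 1 := by
  rw [letterRep, FreeGroup.range_lift_eq_closure, Subgroup.closure_le]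
  rintro _ ⟨a, rfl⟩
  exact ⟨by simpa [Units.oneAdd] using letterMatrix_mem_upperBand ls m a,
    by simpa [Units.oneAdd] using neg_mem (letterMatrix_mem_upperBand ls m a)⟩

def syllableMatrix (ls : List α) (m : ℕ) (s : List (α × ℤ)) : Matrix (Fin m) (Fin m) ℤ :=
  (s.map fun p => 1 + p.2 • letterMatrix ls m p.1).prod

theorem syllableMatrix_append_singleton (ls : List α) (m : ℕ) (s : List (α × ℤ)) (p : α × ℤ) :
    syllableMatrix ls m (s ++ [p]) = syllableMatrix ls m s * (1 + p.2 • letterMatrix ls m p.1) := by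
  simp [syllableMatrix]

theorem syllableMatrix_take_apply_zero (s : List (α × ℤ)) (m : ℕ) {t : ℕ}
    (ht : t ≤ s.length) (j : Fin (m + 1)) (hj : t ≤ j) :
    syllableMatrix (s.map Prod.fst) (m + 1) (s.take t) 0 j
      = if (j : ℕ) = t then ((s.take t).map Prod.snd).prod else 0 := by
  induction t generalizing j with
  | zero =>
    simp only [syllableMatrix, List.take_zero, List.map_nil, List.prod_nil, Matrix.one_apply,
      Fin.ext_iff, Fin.val_zero]
    exact if_congr eq_comm rfl rfl
  | succ t ih =>
    have hP : ∀ i : Fin (m + 1), t ≤ i → (i : ℕ) ≠ t →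
        syllableMatrix (s.map Prod.fst) (m + 1) (s.take t) 0 i = 0 := fun i hi hit => by
      rw [ih (by omega) i hi, if_neg hit]
    have hsum : ∑ i, syllableMatrix (s.map Prod.fst) (m + 1) (s.take t) 0 i *
          letterMatrix (s.map Prod.fst) (m + 1) s[t].1 i j
        = if (j : ℕ) = t + 1 then ((s.take t).map Prod.snd).prod else 0 := by
      rw [Finset.sum_eq_single (⟨t, by omega⟩ : Fin (m + 1))]
      · rw [ih (by omega) _ le_rfl]
        simp [letterMatrix, List.getElem?_eq_getElem ht]
      · intro i _ hi
        simp only [letterMatrix, Matrix.of_apply]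
        split_ifs with hij
        · rw [hP i (by omega) (fun h => hi (Fin.ext h)), zero_mul]
        · rw [mul_zero]
      · simp
    rw [List.take_succ_eq_append_getElem ht, syllableMatrix_append_singleton, Matrix.mul_add,
      Matrix.mul_one, Matrix.add_apply, Matrix.mul_smul, Matrix.smul_apply, Matrix.mul_apply,
      hsum, hP j (by omega) (by omega), List.map_append, List.prod_append]
    split_ifs <;> simp [mul_comm]

theorem val_letterRep_syllableProd (ls : List α) (hls : ls.IsChain (· ≠ ·)) (m : ℕ)
    (s : List (α × ℤ)) :
    (letterRep ls hls m (syllableProd s) : Matrix (Fin m) (Fin m) ℤ) = syllableMatrix ls m s := by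
  rw [syllableProd, map_list_prod, ← Units.coeHom_apply, map_list_prod]
  simp [Function.comp_def, letterRep, Units.val_oneAdd_zpow, syllableMatrix]

end LetterMatrix

theorem syllableProd_notMem_lowerCentralSeries {α : Type*} {s : List (α × ℤ)}
    (hs : IsSyllableForm s) (hne : s ≠ []) :
    syllableProd s ∉ (⊤ : Subgroup (FreeGroup α)).lowerCentralSeries s.length := by
  classical
  intro hmem
  have hρ := lowerCentralSeries_le_comap_congruenceSubgroup (upperBand_antitone ℤ _)
    (letterRep _ hs.1 (s.length + 1)) (range_letterRep_le _ hs.1 _) s.length hmem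
  rw [Subgroup.mem_comap, congruenceSubgroup_eq_bot _ (upperBand_eq_bot ℤ _ le_rfl),
    Subgroup.mem_bot] at hρ
  have hentry := congrArg (fun u => u.val 0 (Fin.last s.length)) hρ
  have hcorner := syllableMatrix_take_apply_zero s s.length le_rfl (Fin.last _) le_rfl
  simp only [val_letterRep_syllableProd, Units.val_one] at hentry
  simp only [List.take_length, Fin.val_last, if_true] at hcorner
  have hlast : (0 : Fin (s.length + 1)) ≠ Fin.last _ := by
    simpa [Fin.ext_iff] using (List.length_pos_iff.2 hne).ne
  rw [hcorner, Matrix.one_apply_ne hlast] at hentry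
  obtain ⟨p, hp, hp0⟩ := List.mem_map.1 (List.prod_eq_zero_iff.1 hentry)
  exact hs.2 p hp hp0

/-- A free group is residually nilpotent: the intersection of all terms of its lower
central series is trivial. -/
theorem freeGroup_iInf_lowerCentralSeries_eq_bot (α : Type*) :
    (⨅ k : ℕ, (⊤ : Subgroup (FreeGroup α)).lowerCentralSeries k) = ⊥ := by
  refine (Subgroup.eq_bot_iff_forall _).2 fun w hw => ?_
  obtain ⟨s, hs, rfl⟩ := exists_isSyllableForm_syllableProd_eq w
  by_cases hne : s = []
  · simp [hne, syllableProd]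
  · exact absurd (Subgroup.mem_iInf.1 hw s.length) (syllableProd_notMem_lowerCentralSeries hs hne)
end

section
/- If π is a finitely generated free group, then ⋂_k J(k) = {1}, where J(k) is the kernel of Aut(π) → Aut(π/Γ_k(π)) and Γ_k is the lower central series. In other words, the Johnson filtration of Aut(π) is exhaustive. -/
/-!
An automorphism lying in every `J(k)` moves each `x` by an element `e x * x⁻¹` of `⋂ₖ Γₖ`, so it
suffices that free groups are residually nilpotent (Magnus). In the ring `ℤ⟨X_y⟩` of
noncommutative polynomials truncated in degree `k`, the units `≡ 1` modulo the `m`-th power of the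
augmentation ideal form a descending central series, so any homomorphism sending the generators
to units `1 + X_y` kills `Γ_{k-1}`. Conversely, take a nonempty word whose consecutive letters are
distinct generators (doubling the generators, `xᵢ ↦ x_{i,+} x_{i,-}`, turns every reduced word
into one). In the expansion of `∏ (1 + X_y)^{±1}`, the coefficient of its sequence of generators
is `±1`, because a square `X_y²` never contributes and each factor acts as `1 ± X_y`. So the word
survives in degree `k = length + 1`.
-/

open scoped commutatorElement

theorem eq_one_sub_add_sq_mul_of_one_add_mul_eq_one {A : Type*} [Ring A] {x v : A}
    (h : (1 + x) * v = 1) : v = 1 - x + x ^ 2 * v := by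
  have e : 1 - x + x ^ 2 * v - v = x * ((1 + x) * v - 1) - ((1 + x) * v - 1) := by noncomm_ring
  rw [h, sub_self, mul_zero, sub_zero, sub_eq_zero] at e
  exact e.symm

namespace Ideal

variable {A : Type*} [Ring A]

theorem map_pow_le_pow_map {R : Type*} [Ring R] {f : R →+* A} (hf : Function.Surjective f)
    (I : Ideal R) (n : ℕ) : I.map f ^ n ≤ (I ^ n).map f := by
  induction n with
  | zero => simp [Submodule.pow_zero, Ideal.map_top]
  | succ n ih =>
    rw [Submodule.pow_succ, Submodule.pow_succ]
    refine Ideal.mul_le.mpr fun r hr s hs => ?_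
    obtain ⟨r', hr', rfl⟩ := (mem_map_iff_of_surjective f hf).mp (ih hr)
    obtain ⟨s', hs', rfl⟩ := (mem_map_iff_of_surjective f hf).mp hs
    rw [← map_mul]
    exact mem_map_of_mem f (mul_mem_mul hr' hs')

def oneAddUnits (J : Ideal A) [J.IsTwoSided] : Subgroup Aˣ :=
  (Units.map (Ideal.Quotient.mk J : A →* A ⧸ J)).ker

variable {J : Ideal A} [J.IsTwoSided]

theorem mem_oneAddUnits {u : Aˣ} : u ∈ J.oneAddUnits ↔ (u : A) - 1 ∈ J := by
  rw [oneAddUnits, MonoidHom.mem_ker, Units.ext_iff, Units.coe_map, Units.val_one,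
    ← map_one (Ideal.Quotient.mk J)]
  exact Ideal.Quotient.eq

theorem commutator_mem_oneAddUnits_pow {p q : ℕ} {u v : Aˣ} (hu : u ∈ (J ^ p).oneAddUnits)
    (hv : v ∈ (J ^ q).oneAddUnits) : ⁅u, v⁆ ∈ (J ^ (p + q)).oneAddUnits := by
  rw [mem_oneAddUnits] at *
  have hvu : (v : A) * u * ↑(u⁻¹ * v⁻¹) = 1 := by
    rw [Units.val_mul, mul_assoc, ← mul_assoc (u : A), Units.mul_inv, one_mul, Units.mul_inv]
  have key : ((⁅u, v⁆ : Aˣ) : A) - 1 = ((u - 1) * (v - 1) - (v - 1) * (u - 1)) * ↑(u⁻¹ * v⁻¹) :=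
    calc ((⁅u, v⁆ : Aˣ) : A) - 1 = u * v * ↑(u⁻¹ * v⁻¹) - v * u * ↑(u⁻¹ * v⁻¹) := by
          rw [hvu, commutatorElement_def]; simp only [Units.val_mul, mul_assoc]
      _ = ((u - 1) * (v - 1) - (v - 1) * (u - 1)) * ↑(u⁻¹ * v⁻¹) := by noncomm_ring
  rw [key]
  refine mul_mem_right _ _ (sub_mem ?_ ?_)
  · rw [IsTwoSided.pow_add]; exact mul_mem_mul hu hv
  · rw [add_comm, IsTwoSided.pow_add]; exact mul_mem_mul hv hu

theorem lowerCentralSeries_le_comap_oneAddUnits {G : Type*} [Group G] (Φ : G →* Aˣ)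
    (hΦ : ∀ g, Φ g ∈ J.oneAddUnits) (n : ℕ) :
    (⊤ : Subgroup G).lowerCentralSeries n ≤ (J ^ (n + 1)).oneAddUnits.comap Φ := by
  refine Subgroup.descending_central_series_ge_lower
    (fun m => (J ^ (m + 1)).oneAddUnits.comap Φ) ⟨?_, fun x m hx g => ?_⟩ n
  · ext g; simpa [Submodule.pow_one] using hΦ g
  · rw [Subgroup.mem_comap, map_commutatorElement]
    exact commutator_mem_oneAddUnits_pow hx (by simpa [Submodule.pow_one] using hΦ g)

theorem eq_one_of_mem_lowerCentralSeries {G : Type*} [Group G] (Φ : G →* Aˣ)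
    (hΦ : ∀ g, Φ g ∈ J.oneAddUnits) {n : ℕ} (hJ : J ^ (n + 1) = ⊥) {g : G}
    (hg : g ∈ (⊤ : Subgroup G).lowerCentralSeries n) : Φ g = 1 := by
  have h := lowerCentralSeries_le_comap_oneAddUnits Φ hΦ n hg
  rw [Subgroup.mem_comap, mem_oneAddUnits, hJ, Ideal.mem_bot, sub_eq_zero] at h
  exact Units.ext h

end Ideal

namespace Magnus

open MonoidAlgebra FreeMonoid

variable {γ : Type*}

abbrev NCPoly (γ : Type*) := MonoidAlgebra ℤ (FreeMonoid γ)

noncomputable def X (y : γ) : NCPoly γ := single (of y) 1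

theorem coeff_X_mul [DecidableEq γ] (y : γ) (f : NCPoly γ) (w : List γ) :
    (X y * f).coeff (ofList w) = if w.head? = some y then f.coeff (ofList w.tail) else 0 := by
  rcases w with _ | ⟨a, w⟩
  · refine coeff_single_mul_of_forall_mul_ne _ _ fun d h => ?_
    simpa using congrArg FreeMonoid.length h
  · by_cases hay : a = y
    · subst hay
      rw [List.head?_cons, List.tail_cons, if_pos rfl, X, ofList_cons,
        coeff_single_mul_eq_mul_coeff (ofList w) fun _ _ => mul_right_inj _, one_mul]
    · rw [if_neg (by simpa using hay)]
      refine coeff_single_mul_of_forall_mul_ne _ _ fun d h => hay ?_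
      exact (by simpa using (congrArg FreeMonoid.toList h).symm : a = y ∧ _).1

theorem le_length_of_mem_support_mul {p q : ℕ} {x y : NCPoly γ}
    (hx : ∀ w ∈ x.coeff.support, p ≤ w.length) (hy : ∀ w ∈ y.coeff.support, q ≤ w.length) :
    ∀ w ∈ (x * y).coeff.support, p + q ≤ w.length := by
  classical
  intro w hw
  obtain ⟨u, hu, v, hv, rfl⟩ := Finset.mem_mul.mp (support_coeff_mul_subset x y hw)
  rw [FreeMonoid.length_mul]
  exact Nat.add_le_add (hx u hu) (hy v hv)

/-- `orderIdeal 1` is the augmentation ideal. -/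
def orderIdeal (k : ℕ) : Ideal (NCPoly γ) where
  carrier := {x | ∀ w ∈ x.coeff.support, k ≤ w.length}
  zero_mem' := by simp
  add_mem' {x y} hx hy w hw := by
    classical
    rcases Finset.mem_union.mp (Finsupp.support_add hw) with h | h
    exacts [hx w h, hy w h]
  smul_mem' c x hx := by
    simpa using le_length_of_mem_support_mul (p := 0) (x := c) (by simp) hx

theorem orderIdeal_mul_le (p q : ℕ) :
    orderIdeal p * orderIdeal q ≤ (orderIdeal (p + q) : Ideal (NCPoly γ)) :=
  Ideal.mul_le.mpr fun _ hx _ hy => le_length_of_mem_support_mul hx hy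

instance (k : ℕ) : (orderIdeal k : Ideal (NCPoly γ)).IsTwoSided :=
  ⟨fun y {x} hx => by
    simpa using orderIdeal_mul_le k 0 (Ideal.mul_mem_mul hx fun _ _ => Nat.zero_le _)⟩

theorem pow_orderIdeal_one_le (k : ℕ) : orderIdeal 1 ^ k ≤ (orderIdeal k : Ideal (NCPoly γ)) := by
  induction k with
  | zero => rw [Submodule.pow_zero, Ideal.one_eq_top]; exact fun x _ w _ => Nat.zero_le _
  | succ k ih =>
    rw [Submodule.pow_succ]
    exact (Ideal.mul_mono_left ih).trans (orderIdeal_mul_le k 1)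

theorem coeff_eq_zero_of_mem_orderIdeal {k : ℕ} {x : NCPoly γ} (hx : x ∈ orderIdeal k)
    {w : FreeMonoid γ} (hw : w.length < k) : x.coeff w = 0 :=
  Finsupp.notMem_support_iff.mp fun h => (hx w h).not_gt hw

theorem X_mem_orderIdeal_one (y : γ) : X y ∈ orderIdeal 1 := by
  intro w hw
  rw [Finset.mem_singleton.mp (Finsupp.support_single_subset hw)]
  rfl

/-- The shape of the image of a letter (`ε = 1`) or of its inverse (`ε = -1`); the square term is
invisible to coefficients at words without two equal consecutive letters. -/
noncomputable def magnusFactor (y : γ) (ε : ℤ) (r : NCPoly γ) : NCPoly γ :=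
  1 + ε • X y + X y ^ 2 * r

theorem coeff_magnusFactor_mul [DecidableEq γ] (y : γ) (ε : ℤ) (r f : NCPoly γ) {w : List γ}
    (hw : w.IsChain (· ≠ ·)) :
    (magnusFactor y ε r * f).coeff (ofList w)
      = f.coeff (ofList w) + if w.head? = some y then ε * f.coeff (ofList w.tail) else 0 := by
  have hsq : (X y ^ 2 * r * f).coeff (ofList w) = 0 := by
    rw [pow_two, mul_assoc, mul_assoc, coeff_X_mul, coeff_X_mul]
    rcases w with _ | ⟨a, _ | ⟨b, w⟩⟩ <;> simp only [List.head?_cons, List.head?_nil,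
      List.tail_cons, reduceCtorEq, if_false, ite_self, Option.some.injEq]
    split_ifs with hay hby
    exacts [absurd (hay.trans hby.symm) (List.isChain_cons_cons.mp hw).1, rfl, rfl]
  rw [magnusFactor, add_mul, add_mul, one_mul, coeff_add, coeff_add, Finsupp.add_apply,
    Finsupp.add_apply, hsq, add_zero, smul_mul_assoc, coeff_smul_apply, coeff_X_mul, smul_ite,
    smul_zero, smul_eq_mul]

abbrev Truncation (γ : Type*) (k : ℕ) := NCPoly γ ⧸ (orderIdeal 1 : Ideal (NCPoly γ)) ^ k

noncomputable def magnusUnit (k : ℕ) (y : γ) : (Truncation γ k)ˣ :=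
  (IsNilpotent.isUnit_one_add (r := Ideal.Quotient.mk _ (X y)) ⟨k, by
    rw [← map_pow, Ideal.Quotient.eq_zero_iff_mem]
    exact Ideal.pow_mem_pow (X_mem_orderIdeal_one y) k⟩).unit

theorem val_magnusUnit (k : ℕ) (y : γ) :
    (magnusUnit k y : Truncation γ k) = Ideal.Quotient.mk _ (1 + X y) := by
  simp [magnusUnit]

noncomputable def magnusHom (k : ℕ) : FreeGroup γ →* (Truncation γ k)ˣ :=
  FreeGroup.lift (magnusUnit k)

theorem magnusHom_mem_oneAddUnits (k : ℕ) (g : FreeGroup γ) :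
    magnusHom k g ∈ ((orderIdeal 1).map (Ideal.Quotient.mk (orderIdeal 1 ^ k))).oneAddUnits := by
  induction g using FreeGroup.induction_on with
  | C1 => exact one_mem _
  | of y =>
    rw [magnusHom, FreeGroup.lift_apply_of, Ideal.mem_oneAddUnits, val_magnusUnit, map_add,
      map_one, add_sub_cancel_left]
    exact Ideal.mem_map_of_mem _ (X_mem_orderIdeal_one y)
  | inv_of y h => rw [map_inv]; exact inv_mem h
  | mul x y hx hy => rw [map_mul]; exact mul_mem hx hy

theorem exists_magnusFactor_eq (k : ℕ) (y : γ) (b : Bool) : ∃ ε : ℤˣ, ∃ r : NCPoly γ,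
    Ideal.Quotient.mk _ (magnusFactor y ε r)
      = ((cond b (magnusUnit k y) (magnusUnit k y)⁻¹ : (Truncation γ k)ˣ) : Truncation γ k) := by
  cases b
  · obtain ⟨r, hr⟩ := Ideal.Quotient.mk_surjective
      (((magnusUnit k y)⁻¹ : (Truncation γ k)ˣ) : Truncation γ k)
    refine ⟨-1, r, ?_⟩
    have h := (magnusUnit k y).mul_inv
    rw [val_magnusUnit, map_add, map_one] at h
    rw [cond_false, eq_one_sub_add_sq_mul_of_one_add_mul_eq_one h, ← hr]
    simp [magnusFactor, sub_eq_add_neg]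
  · exact ⟨1, 0, by simp [magnusFactor, val_magnusUnit]⟩

theorem exists_lift_magnusHom_mk [DecidableEq γ] (k : ℕ) (L : List (γ × Bool)) :
    ∃ P : NCPoly γ,
      Ideal.Quotient.mk _ P = (magnusHom k (FreeGroup.mk L) : Truncation γ k) ∧
      ∃ c : ℤˣ, ∀ w : List γ, w.IsChain (· ≠ ·) → L.length ≤ w.length →
        P.coeff (ofList w) = if w = L.map Prod.fst then (c : ℤ) else 0 := by
  rw [magnusHom, FreeGroup.lift_mk]
  induction L with
  | nil => exact ⟨1, by simp, 1, fun w _ _ => by cases w <;> simp [MonoidAlgebra.one_def]⟩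
  | cons p L ih =>
    obtain ⟨P, hP, c, hc⟩ := ih
    obtain ⟨ε, r, hf⟩ := exists_magnusFactor_eq k p.1 p.2
    refine ⟨magnusFactor p.1 ε r * P, ?_, ε * c, fun w hw hlen => ?_⟩
    · rw [map_mul, hf, hP, List.map_cons, List.prod_cons, Units.val_mul]
    rcases w with _ | ⟨a, w⟩
    · simp at hlen
    have hne : a :: w ≠ L.map Prod.fst := fun h => by simp [h] at hlen
    rw [coeff_magnusFactor_mul _ _ _ _ hw, hc _ hw (Nat.le_of_succ_le hlen), if_neg hne,
      hc _ hw.tail (Nat.le_of_succ_le_succ hlen)]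
    simp only [List.head?_cons, List.tail_cons, Option.some.injEq, List.map_cons, List.cons.injEq]
    split_ifs <;> simp_all

theorem magnusHom_mk_ne_one {k : ℕ} {L : List (γ × Bool)} (hL : L ≠ [])
    (hchain : (L.map Prod.fst).IsChain (· ≠ ·)) (hk : L.length < k) :
    magnusHom k (FreeGroup.mk L) ≠ 1 := by
  classical
  obtain ⟨P, hP, c, hc⟩ := exists_lift_magnusHom_mk k L
  intro h
  rw [h, Units.val_one, ← map_one (Ideal.Quotient.mk _), Ideal.Quotient.eq] at hP
  have h0 := coeff_eq_zero_of_mem_orderIdeal (pow_orderIdeal_one_le k hP)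
    (w := ofList (L.map Prod.fst)) (by simpa [FreeMonoid.length] using hk)
  have h1 : (1 : NCPoly γ).coeff (ofList (L.map Prod.fst)) = 0 := by
    rw [MonoidAlgebra.one_def, coeff_single, Finsupp.single_eq_of_ne]
    exact fun h => hL (List.map_eq_nil_iff.mp (congrArg FreeMonoid.toList h))
  rw [coeff_sub, Finsupp.sub_apply, hc _ hchain (by simp), if_pos rfl, h1, sub_zero] at h0
  exact c.ne_zero h0

end Magnus

namespace FreeGroup

theorem mk_notMem_lowerCentralSeries {γ : Type*} {L : List (γ × Bool)}
    (hL : L ≠ []) (hchain : (L.map Prod.fst).IsChain (· ≠ ·)) :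
    mk L ∉ (⊤ : Subgroup (FreeGroup γ)).lowerCentralSeries L.length := fun hmem =>
  Magnus.magnusHom_mk_ne_one hL hchain (Nat.lt_succ_self _) <|
    Ideal.eq_one_of_mem_lowerCentralSeries _ (Magnus.magnusHom_mem_oneAddUnits _)
      (le_bot_iff.mp <| (Ideal.map_pow_le_pow_map Ideal.Quotient.mk_surjective _ _).trans
        (Ideal.map_quotient_self _).le) hmem

variable {ι : Type*}

def doubleLetter (p : ι × Bool) : List ((ι × Bool) × Bool) := [(p, p.2), ((p.1, !p.2), p.2)]

def doubling : FreeGroup ι →* FreeGroup (ι × Bool) :=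
  FreeGroup.lift fun i => of (i, true) * of (i, false)

theorem doubling_mk (L : List (ι × Bool)) : doubling (mk L) = mk (L.flatMap doubleLetter) := by
  rw [doubling, lift_mk]
  induction L with
  | nil => rfl
  | cons p L ih =>
    rw [List.map_cons, List.prod_cons, ih, List.flatMap_cons, ← mul_mk]
    congr 1
    rcases p with ⟨i, _ | _⟩ <;> simp [of, mul_mk, inv_mk, invRev, doubleLetter]

theorem IsReduced.isChain_map_fst_flatMap_doubleLetter {L : List (ι × Bool)} (hL : IsReduced L) :
    ((L.flatMap doubleLetter).map Prod.fst).IsChain (· ≠ ·) := by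
  induction L with
  | nil => exact List.IsChain.nil
  | cons p L ih =>
    cases L with
    | nil => simp [doubleLetter, Prod.ext_iff]
    | cons q L =>
      obtain ⟨hpq, hL⟩ := isReduced_cons_cons.mp hL
      simp only [List.flatMap_cons, doubleLetter, List.map_cons, List.cons_append,
        List.nil_append] at ih ⊢
      refine .cons_cons (fun h => by simpa using congrArg Prod.snd h) (.cons_cons ?_ (ih hL))
      rintro rfl
      simp at hpq

theorem eq_one_of_forall_mem_lowerCentralSeries (g : FreeGroup ι)
    (hg : ∀ n, g ∈ (⊤ : Subgroup (FreeGroup ι)).lowerCentralSeries n) : g = 1 := by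
  classical
  by_contra hne
  set D := g.toWord.flatMap doubleLetter
  have hD : D ≠ [] := by
    simpa [D, doubleLetter, List.flatMap_eq_nil_iff, ← List.eq_nil_iff_forall_not_mem] using hne
  refine mk_notMem_lowerCentralSeries hD isReduced_toWord.isChain_map_fst_flatMap_doubleLetter ?_
  rw [← doubling_mk, mk_toWord]
  exact Subgroup.lowerCentralSeries_mono _ le_top
    (Subgroup.map_lowerCentralSeries _ doubling _ ▸ Subgroup.mem_map_of_mem _ (hg _))

end FreeGroup

/-- For a finitely generated free group `π`, the Johnson filtration of `Aut(π)` is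
exhaustive: the intersection of the kernels `J(k)` of the maps
`Aut(π) → Aut(π/Γ_k(π))` is trivial.  An automorphism `e` lies in `J(k)` iff
`e x * x⁻¹ ∈ Γ_k(π)` for all `x`. -/
theorem johnson_filtration_aut_free_exhaustive (n : ℕ) :
    (⋂ k : ℕ, {e : MulAut (FreeGroup (Fin n)) |
      ∀ x : FreeGroup (Fin n), e x * x⁻¹ ∈ Subgroup.lowerCentralSeries (⊤ : Subgroup (FreeGroup (Fin n))) k})
      = {1} := by
  ext e
  simp only [Set.mem_iInter, Set.mem_ofPred_eq, Set.mem_singleton_iff]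
  refine ⟨fun h => MulEquiv.ext fun x => mul_inv_eq_one.mp <|
    FreeGroup.eq_one_of_forall_mem_lowerCentralSeries _ fun k => h k x, ?_⟩
  rintro rfl k x
  rw [MulAut.one_apply, mul_inv_cancel]
  exact one_mem _
end

section
/- In the free group F₂ = ⟨x,y⟩, the commutator xyx⁻¹y⁻¹ lies in the commutator subgroup but is not a proper power: it is not of the form wⁿ for any word w and any n ≥ 2. -/
/-!
Send `x ↦ (1, 0, 0)` and `y ↦ (0, 1, 0)` in the integral Heisenberg group, where `[x, y]` becomes
the central generator `(0, 0, 1)`. If `w ^ n = [x, y]`, the image `(a, b, c)` of `w` satisfies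
`n a = n b = 0`, so `a = b = 0` and the last coordinate reads `n c = 1`, impossible for `n ≥ 2`.
-/

open scoped commutatorElement

@[ext]
structure Heisenberg (R : Type*) where
  a : R
  b : R
  c : R

namespace Heisenberg

variable {R : Type*} [CommRing R]

instance : Mul (Heisenberg R) := ⟨fun g h => ⟨g.a + h.a, g.b + h.b, g.c + h.c + g.a * h.b⟩⟩
instance : One (Heisenberg R) := ⟨⟨0, 0, 0⟩⟩
instance : Inv (Heisenberg R) := ⟨fun g => ⟨-g.a, -g.b, -g.c + g.a * g.b⟩⟩

@[simp] lemma mul_a (g h : Heisenberg R) : (g * h).a = g.a + h.a := rfl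
@[simp] lemma mul_b (g h : Heisenberg R) : (g * h).b = g.b + h.b := rfl
@[simp] lemma mul_c (g h : Heisenberg R) : (g * h).c = g.c + h.c + g.a * h.b := rfl
@[simp] lemma one_a : (1 : Heisenberg R).a = 0 := rfl
@[simp] lemma one_b : (1 : Heisenberg R).b = 0 := rfl
@[simp] lemma one_c : (1 : Heisenberg R).c = 0 := rfl
@[simp] lemma inv_a (g : Heisenberg R) : g⁻¹.a = -g.a := rfl
@[simp] lemma inv_b (g : Heisenberg R) : g⁻¹.b = -g.b := rfl
@[simp] lemma inv_c (g : Heisenberg R) : g⁻¹.c = -g.c + g.a * g.b := rfl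

instance : Group (Heisenberg R) where
  mul_assoc g h k := by ext <;> simp <;> ring
  one_mul g := by ext <;> simp
  mul_one g := by ext <;> simp
  inv_mul_cancel g := by ext <;> simp

lemma pow_eq (g : Heisenberg R) (n : ℕ) :
    g ^ n = ⟨n * g.a, n * g.b, n * g.c + (n.choose 2 : ℕ) * g.a * g.b⟩ := by
  induction n with
  | zero => ext <;> simp
  | succ n ih =>
    rw [pow_succ, ih]
    ext <;> simp <;> push_cast [Nat.choose_succ_succ, Nat.choose_one_right] <;> ring

lemma commutatorElement_mk (r s : R) :
    ⁅(⟨r, 0, 0⟩ : Heisenberg R), (⟨0, s, 0⟩ : Heisenberg R)⁆ = ⟨0, 0, r * s⟩ := by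
  ext <;> simp [commutatorElement_def]

lemma pow_ne_mk_zero_zero_one (g : Heisenberg ℤ) {n : ℕ} (hn : 2 ≤ n) : g ^ n ≠ ⟨0, 0, 1⟩ := by
  intro h
  rw [pow_eq, Heisenberg.mk.injEq] at h
  obtain ⟨ha, -, hc⟩ := h
  have hn₀ : (n : ℤ) ≠ 0 := by omega
  have ha₀ : g.a = 0 := (mul_eq_zero.mp ha).resolve_left hn₀
  rw [ha₀, mul_zero, zero_mul, add_zero] at hc
  have hn₁ : (n : ℤ) = 1 := Int.eq_one_of_dvd_one (by omega) ⟨g.c, hc.symm⟩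
  omega

end Heisenberg

lemma FreeGroup.pow_ne_commutatorElement_of {α : Type*} (i j : α) (hij : i ≠ j) {n : ℕ}
    (hn : 2 ≤ n) (w : FreeGroup α) : w ^ n ≠ ⁅of i, of j⁆ := by
  classical
  let φ : FreeGroup α →* Heisenberg ℤ :=
    lift fun k => if k = i then ⟨1, 0, 0⟩ else if k = j then ⟨0, 1, 0⟩ else 1
  intro h
  apply Heisenberg.pow_ne_mk_zero_zero_one (φ w) hn
  rw [← map_pow, h, map_commutatorElement]
  simp [φ, hij.symm, Heisenberg.commutatorElement_mk]

/-- In the free group on two generators `x`, `y`, the commutator `x y x⁻¹ y⁻¹` lies in the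
commutator subgroup but is not a proper power `wⁿ` with `n ≥ 2`. -/
theorem freeGroup_commutator_mem_commutator_not_properPower :
    (FreeGroup.of (0 : Fin 2) * FreeGroup.of 1 * (FreeGroup.of 0)⁻¹ * (FreeGroup.of 1)⁻¹
        ∈ commutator (FreeGroup (Fin 2))) ∧
      ∀ (w : FreeGroup (Fin 2)) (n : ℕ), 2 ≤ n →
        w ^ n ≠ FreeGroup.of (0 : Fin 2) * FreeGroup.of 1 *
          (FreeGroup.of 0)⁻¹ * (FreeGroup.of 1)⁻¹ := by
  simp only [← commutatorElement_def]
  refine ⟨?_, fun w n hn => FreeGroup.pow_ne_commutatorElement_of 0 1 (by decide) hn w⟩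
  rw [commutator_eq_closure]
  exact Subgroup.subset_closure (commutator_mem_commutatorSet _ _)
end

section
/- For the free group F on generators x₁,…,x_{2g} (g ≥ 1), the element c = [x₁,x₂][x₃,x₄]⋯[x_{2g−1},x_{2g}] lies in Γ₁(F) = [F,F] but not in Γ₂(F) = [F,[F,F]]. -/
/-!
Send the even-indexed generators of `F` to `X` and the odd-indexed ones to `Y` in the integer
Heisenberg group, which is nilpotent of class two. Then `Γ₂(F)` maps to the trivial group, while
`c` maps to `[X, Y]^g`, the central element with `z`-coordinate `g ≠ 0`.
-/

open scoped commutatorElement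

/-- The surface boundary relator `c = [x₁,x₂] ⋯ [x_{2g-1},x_{2g}]` of a genus-`g` surface,
as an element of the free group on `2g` generators. -/
noncomputable def surfaceRelator (g : ℕ) : FreeGroup (Fin (2 * g)) :=
  ((List.finRange g).map fun (i : Fin g) =>
    ⁅FreeGroup.of (⟨2 * (i : ℕ), by have := i.isLt; omega⟩ : Fin (2 * g)),
      FreeGroup.of (⟨2 * (i : ℕ) + 1, by have := i.isLt; omega⟩ : Fin (2 * g))⁆).prod

/-- The unitriangular matrix `[[1, x, z], [0, 1, y], [0, 0, 1]]`; multiplication below is the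
matrix product. -/
@[ext] structure Heisenberg_s18 where
  x : ℤ
  y : ℤ
  z : ℤ

namespace Heisenberg_s18

instance : Mul Heisenberg_s18 := ⟨fun a b => ⟨a.x + b.x, a.y + b.y, a.z + b.z + a.x * b.y⟩⟩
instance : One Heisenberg_s18 := ⟨⟨0, 0, 0⟩⟩
instance : Inv Heisenberg_s18 := ⟨fun a => ⟨-a.x, -a.y, -a.z + a.x * a.y⟩⟩

@[simp] lemma mul_x (a b : Heisenberg_s18) : (a * b).x = a.x + b.x := rfl
@[simp] lemma mul_y (a b : Heisenberg_s18) : (a * b).y = a.y + b.y := rfl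
@[simp] lemma mul_z (a b : Heisenberg_s18) : (a * b).z = a.z + b.z + a.x * b.y := rfl
@[simp] lemma one_x : (1 : Heisenberg_s18).x = 0 := rfl
@[simp] lemma one_y : (1 : Heisenberg_s18).y = 0 := rfl
@[simp] lemma one_z : (1 : Heisenberg_s18).z = 0 := rfl
@[simp] lemma inv_x (a : Heisenberg_s18) : a⁻¹.x = -a.x := rfl
@[simp] lemma inv_y (a : Heisenberg_s18) : a⁻¹.y = -a.y := rfl
@[simp] lemma inv_z (a : Heisenberg_s18) : a⁻¹.z = -a.z + a.x * a.y := rfl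

instance : Group Heisenberg_s18 where
  mul_assoc a b c := by ext <;> simp <;> ring
  one_mul a := by ext <;> simp
  mul_one a := by ext <;> simp
  inv_mul_cancel a := by ext <;> simp

lemma commutatorElement_eq (a b : Heisenberg_s18) : ⁅a, b⁆ = ⟨0, 0, a.x * b.y - b.x * a.y⟩ := by
  rw [commutatorElement_def]
  ext <;> simp; ring

lemma mem_center_of_x_eq_zero_of_y_eq_zero {u : Heisenberg_s18} (hx : u.x = 0) (hy : u.y = 0) :
    u ∈ Subgroup.center Heisenberg_s18 :=
  Subgroup.mem_center_iff.mpr fun v => by ext <;> simp [hx, hy]; ring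

lemma lowerCentralSeries_two_eq_bot : (⊤ : Subgroup Heisenberg_s18).lowerCentralSeries 2 = ⊥ := by
  apply Subgroup.lowerCentralSeries_succ_eq_bot
  rw [Subgroup.top_lowerCentralSeries_one, commutator_def, Subgroup.commutator_le]
  intro a _ b _
  rw [commutatorElement_eq]
  exact mem_center_of_x_eq_zero_of_y_eq_zero rfl rfl

lemma pow_z_of_y_eq_zero {u : Heisenberg_s18} (hy : u.y = 0) (n : ℕ) :
    (u ^ n).z = n * u.z := by
  induction n with
  | zero => simp
  | succ n ih => simp [pow_succ, ih, hy]; ring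

end Heisenberg_s18

lemma surfaceRelator_mem_commutator (g : ℕ) :
    surfaceRelator g ∈ commutator (FreeGroup (Fin (2 * g))) := by
  refine list_prod_mem fun w hw => ?_
  obtain ⟨i, -, rfl⟩ := List.mem_map.mp hw
  exact Subgroup.commutator_mem_commutator (Subgroup.mem_top _) (Subgroup.mem_top _)

lemma lift_surfaceRelator {H : Type*} [Group H] (g : ℕ) (a b : H) :
    FreeGroup.lift (fun i : Fin (2 * g) => if (i : ℕ) % 2 = 0 then a else b) (surfaceRelator g) =
      ⁅a, b⁆ ^ g := by
  rw [surfaceRelator, map_list_prod, List.map_map]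
  simp [Function.comp_def, map_commutatorElement]

/-- The surface relator lies in `Γ₁(F) = [F, F]` but not in `Γ₂(F) = [F, [F, F]]`. -/
theorem surfaceRelator_mem_lcs_one_not_mem_lcs_two (g : ℕ) (hg : 1 ≤ g) :
    surfaceRelator g ∈ (⊤ : Subgroup (FreeGroup (Fin (2 * g)))).lowerCentralSeries 1 ∧
      surfaceRelator g ∉ (⊤ : Subgroup (FreeGroup (Fin (2 * g)))).lowerCentralSeries 2 := by
  refine ⟨surfaceRelator_mem_commutator g, fun h => ?_⟩
  let φ := FreeGroup.lift fun i : Fin (2 * g) =>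
    if (i : ℕ) % 2 = 0 then (⟨1, 0, 0⟩ : Heisenberg_s18) else ⟨0, 1, 0⟩
  have hφ : φ (surfaceRelator g) ∈ (⊤ : Subgroup Heisenberg_s18).lowerCentralSeries 2 :=
    Subgroup.lowerCentralSeries_mono 2 le_top
      (Subgroup.map_lowerCentralSeries _ φ 2 ▸ Subgroup.mem_map_of_mem φ h)
  rw [Heisenberg_s18.lowerCentralSeries_two_eq_bot, Subgroup.mem_bot, lift_surfaceRelator,
    Heisenberg_s18.commutatorElement_eq] at hφ
  have hz := congrArg Heisenberg_s18.z hφ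
  rw [Heisenberg_s18.pow_z_of_y_eq_zero rfl] at hz
  norm_num at hz
  omega
end
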